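/- Let G = (U ∪ V, E) be a finite bipartite graph, let w_e > 0 for each e ∈ E, and let μ be the Gibbs distribution on matchings of G, i.e., μ(M) ∝ ∏_{e∈M} w_e over all matchings M. For a vertex z, let Occ(z) denote the event that the random matching S ∼ μ contains an edge incident to z. Then for every u ∈ U and v ∈ V, the events 'u is unmatched' and 'v is unmatched' are positively correlated: P[not Occ(u) and not Occ(v)] ≥ P[not Occ(u)] · P[not Occ(v)]. -/

import Mathlib

open Finset

/-- `S` is a matching of the bipartite graph whose edge `e` joins `eu e ∈ U` to `ev e ∈ V`:
no two distinct edges of `S` share an endpoint. -/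
def IsBipMatching {U V E : Type*} (eu : E → U) (ev : E → V) (S : Finset E) : Prop :=
  ∀ e ∈ S, ∀ f ∈ S, e ≠ f → eu e ≠ eu f ∧ ev e ≠ ev f

instance {U V E : Type*} [DecidableEq U] [DecidableEq V] [DecidableEq E]
    (eu : E → U) (ev : E → V) (S : Finset E) : Decidable (IsBipMatching eu ev S) :=
  inferInstanceAs (Decidable (∀ e ∈ S, ∀ f ∈ S, e ≠ f → eu e ≠ eu f ∧ ev e ≠ ev f))

/-!
Write `Z(A)` for the total weight of the matchings inside the edge set `A`, and `A - x` for `A`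
without the edges at the vertex `x`. Splitting the matchings of `A` according to whether they
contain the edge `e = uy` gives `Z(A) = Z(A - e) + w_e Z(A - u - y)`. With this recursion one
proves simultaneously, by induction on `A`,
* `Z(A - u) Z(A - v) ≤ Z(A) Z(A - u - v)` for `u ∈ U`, `v ∈ V`, and
* `Z(A) Z(A - y - v) ≤ Z(A - y) Z(A - v)` for distinct `y, v ∈ V`:
expanding along an edge at `u` (resp. at `y`), each inequality for `A` reduces to both
inequalities for smaller edge sets. The theorem is the first one for all edges, divided by `Z²`.
-/

theorem IsBipMatching.insert_iff {U V E : Type*} [DecidableEq E] {eu : E → U} {ev : E → V}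
    {S : Finset E} {e : E} (he : e ∉ S) :
    IsBipMatching eu ev (insert e S) ↔
      IsBipMatching eu ev S ∧ ∀ f ∈ S, eu f ≠ eu e ∧ ev f ≠ ev e := by
  have hne : ∀ f ∈ S, f ≠ e := fun f hf hfe => he (hfe ▸ hf)
  simp only [IsBipMatching, mem_insert, forall_eq_or_imp, ne_eq, not_true_eq_false,
    IsEmpty.forall_iff, true_and]
  constructor
  · rintro ⟨-, hS⟩
    exact ⟨fun f hf => (hS f hf).2, fun f hf => (hS f hf).1 (hne f hf)⟩
  · rintro ⟨hS, hSe⟩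
    exact ⟨fun f hf _ => ⟨Ne.symm (hSe f hf).1, Ne.symm (hSe f hf).2⟩,
      fun f hf => ⟨fun _ => hSe f hf, hS f hf⟩⟩

section Correlation

variable {U V E : Type*} [DecidableEq U] [DecidableEq V] (eu : E → U) (ev : E → V)

def deleteU (A : Finset E) (u : U) : Finset E := A.filter (eu · ≠ u)

def deleteV (A : Finset E) (v : V) : Finset E := A.filter (ev · ≠ v)

variable {eu ev} {A B : Finset E} {e : E}

theorem deleteU_deleteV_comm (u : U) (v : V) :
    deleteU eu (deleteV ev A v) u = deleteV ev (deleteU eu A u) v :=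
  filter_comm _ _ _

theorem deleteV_comm (y v : V) : deleteV ev (deleteV ev A y) v = deleteV ev (deleteV ev A v) y :=
  filter_comm _ _ _

theorem notMem_deleteV (he : e ∉ B) (v : V) : e ∉ deleteV ev B v :=
  fun h => he (mem_filter.1 h).1

variable [DecidableEq E]

theorem deleteU_insert_self : deleteU eu (insert e B) (eu e) = deleteU eu B (eu e) := by
  simp [deleteU, filter_insert]

theorem deleteV_insert_self : deleteV ev (insert e B) (ev e) = deleteV ev B (ev e) := by
  simp [deleteV, filter_insert]

theorem deleteV_insert_of_ne {v : V} (h : ev e ≠ v) :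
    deleteV ev (insert e B) v = insert e (deleteV ev B v) := by
  simp [deleteV, filter_insert, h]

variable (eu ev) (w : E → ℝ)

noncomputable def partitionFn (A : Finset E) : ℝ :=
  ∑ S ∈ A.powerset.filter (IsBipMatching eu ev), ∏ e ∈ S, w e

variable {w}

theorem partitionFn_pos (hw : ∀ e, 0 ≤ w e) (A : Finset E) : 0 < partitionFn eu ev w A :=
  sum_pos' (fun S _ => prod_nonneg fun e _ => hw e)
    ⟨∅, mem_filter.2 ⟨empty_mem_powerset A, fun _ h => absurd h (notMem_empty _)⟩, by simp⟩

variable {eu ev}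

theorem sum_filter_univ_eq_partitionFn [Fintype E] (A : Finset E) (P : Finset E → Prop)
    [DecidablePred P] (hP : ∀ S, P S ↔ S ⊆ A) :
    ∑ S ∈ univ.filter (fun S => IsBipMatching eu ev S ∧ P S), ∏ e ∈ S, w e =
      partitionFn eu ev w A := by
  refine sum_congr (ext fun S => ?_) fun _ _ => rfl
  simp only [mem_filter, mem_univ, true_and, mem_powerset, hP, and_comm]

theorem partitionFn_insert (he : e ∉ B) :
    partitionFn eu ev w (insert e B) = partitionFn eu ev w B +
      w e * partitionFn eu ev w (deleteV ev (deleteU eu B (eu e)) (ev e)) := by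
  set C := deleteV ev (deleteU eu B (eu e)) (ev e)
  have hCB : C ⊆ B := (filter_subset _ _).trans (filter_subset _ _)
  have hcompat : ∀ S ⊆ B,
      IsBipMatching eu ev (insert e S) ↔ S ∈ C.powerset.filter (IsBipMatching eu ev) := by
    intro S hSB
    rw [IsBipMatching.insert_iff fun h => he (hSB h)]
    simp only [C, mem_filter, mem_powerset, deleteV, deleteU, subset_iff]
    constructor
    · rintro ⟨hS, hSe⟩; exact ⟨fun f hf => ⟨⟨hSB hf, (hSe f hf).1⟩, (hSe f hf).2⟩, hS⟩
    · rintro ⟨hS, hM⟩; exact ⟨hM, fun f hf => ⟨(hS hf).1.2, (hS hf).2⟩⟩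
  have hsummand : ∀ S ∈ B.powerset,
      (if IsBipMatching eu ev (insert e S) then ∏ f ∈ insert e S, w f else 0) =
        if S ∈ C.powerset.filter (IsBipMatching eu ev) then w e * ∏ f ∈ S, w f else 0 :=
    fun S hS => if_congr (hcompat S (mem_powerset.1 hS))
      (prod_insert fun h => he (mem_powerset.1 hS h)) rfl
  rw [partitionFn, partitionFn, partitionFn, sum_filter, sum_powerset_insert he, ← sum_filter,
    sum_congr rfl hsummand, sum_ite_mem,
    inter_eq_right.2 ((powerset_mono.2 hCB).trans' (filter_subset _ _)), mul_sum]

variable (eu ev w)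

def UnmatchedPosCorrelated (A : Finset E) (u : U) (v : V) : Prop :=
  partitionFn eu ev w (deleteU eu A u) * partitionFn eu ev w (deleteV ev A v) ≤
    partitionFn eu ev w A * partitionFn eu ev w (deleteV ev (deleteU eu A u) v)

def UnmatchedNegCorrelated (A : Finset E) (y v : V) : Prop :=
  partitionFn eu ev w A * partitionFn eu ev w (deleteV ev (deleteV ev A y) v) ≤
    partitionFn eu ev w (deleteV ev A y) * partitionFn eu ev w (deleteV ev A v)

variable {eu ev w}

theorem unmatchedPosCorrelated_of_forall_ne {u : U} (h : ∀ e ∈ A, eu e ≠ u)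
    (v : V) : UnmatchedPosCorrelated eu ev w A u v := by
  have hA : deleteU eu A u = A := filter_true_of_mem h
  rw [UnmatchedPosCorrelated, hA]

theorem unmatchedNegCorrelated_of_forall_ne {y : V} (h : ∀ e ∈ A, ev e ≠ y)
    (v : V) : UnmatchedNegCorrelated eu ev w A y v := by
  have hA : deleteV ev A y = A := filter_true_of_mem h
  rw [UnmatchedNegCorrelated, hA]

theorem UnmatchedPosCorrelated.insert (hw : ∀ e, 0 ≤ w e) (he : e ∉ B)
    {v : V} (hB : UnmatchedPosCorrelated eu ev w B (eu e) v)
    (hC : ev e ≠ v → UnmatchedNegCorrelated eu ev w (deleteU eu B (eu e)) (ev e) v) :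
    UnmatchedPosCorrelated eu ev w (insert e B) (eu e) v := by
  unfold UnmatchedPosCorrelated at *
  rw [deleteU_insert_self, partitionFn_insert he]
  have hC₀ := (partitionFn_pos eu ev hw (deleteV ev (deleteU eu B (eu e)) v)).le
  by_cases hv : ev e = v
  · subst hv
    rw [deleteV_insert_self]
    linear_combination hB + mul_nonneg (mul_nonneg (hw e) hC₀) hC₀
  · specialize hC hv
    unfold UnmatchedNegCorrelated at hC
    rw [deleteV_insert_of_ne hv, partitionFn_insert (notMem_deleteV he v), deleteU_deleteV_comm,
      deleteV_comm]
    linear_combination hB + mul_le_mul_of_nonneg_left hC (hw e)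

theorem UnmatchedNegCorrelated.insert (hw : ∀ e, 0 ≤ w e) (he : e ∉ B)
    {v : V} (hne : ev e ≠ v) (hB : UnmatchedNegCorrelated eu ev w B (ev e) v)
    (hC : UnmatchedPosCorrelated eu ev w (deleteV ev B (ev e)) (eu e) v) :
    UnmatchedNegCorrelated eu ev w (insert e B) (ev e) v := by
  unfold UnmatchedNegCorrelated UnmatchedPosCorrelated at *
  rw [deleteV_insert_self, deleteV_insert_of_ne hne, partitionFn_insert he,
    partitionFn_insert (notMem_deleteV he v), deleteU_deleteV_comm,
    deleteV_comm (A := deleteU eu B (eu e)) v]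
  rw [deleteU_deleteV_comm] at hC
  linear_combination hB + mul_le_mul_of_nonneg_left hC (hw e)

theorem unmatched_correlations (hw : ∀ e, 0 ≤ w e) (A : Finset E) :
    (∀ u v, UnmatchedPosCorrelated eu ev w A u v) ∧
      ∀ y v, y ≠ v → UnmatchedNegCorrelated eu ev w A y v := by
  induction A using Finset.strongInduction with
  | H A ih =>
  have peel : ∀ e ∈ A, ∃ B, e ∉ B ∧ A = insert e B ∧ B ⊂ A := fun e he =>
    ⟨A.erase e, notMem_erase e A, (insert_erase he).symm, erase_ssubset he⟩
  refine ⟨fun u v => ?_, fun y v hyv => ?_⟩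
  · by_cases h : ∃ e ∈ A, eu e = u
    · obtain ⟨e, he, rfl⟩ := h
      obtain ⟨B, heB, rfl, hBA⟩ := peel e he
      exact .insert hw heB ((ih B hBA).1 _ v) fun hv =>
        (ih (deleteU eu B (eu e)) ((filter_subset _ _).trans_ssubset hBA)).2 _ v hv
    · exact unmatchedPosCorrelated_of_forall_ne (by simpa using h) v
  · by_cases h : ∃ e ∈ A, ev e = y
    · obtain ⟨e, he, rfl⟩ := h
      obtain ⟨B, heB, rfl, hBA⟩ := peel e he
      exact .insert hw heB hyv ((ih B hBA).2 _ v hyv)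
        ((ih (deleteV ev B (ev e)) ((filter_subset _ _).trans_ssubset hBA)).1 _ v)
    · exact unmatchedNegCorrelated_of_forall_ne (by simpa using h) v

end Correlation

theorem stmt_3_general
    {U V E : Type*} [Fintype E]
    [DecidableEq U] [DecidableEq V] [DecidableEq E]
    -- a finite simple bipartite graph
    (eu : E → U) (ev : E → V)
    (w : E → ℝ) (hw : ∀ e, 0 < w e)
    (u : U) (v : V)
    -- partition function of the Gibbs distribution on matchings
    (Z : ℝ)
    (hZ : Z = ∑ S ∈ univ.filter (fun S : Finset E => IsBipMatching eu ev S), ∏ e ∈ S, w e) :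
    -- P[u unmatched] * P[v unmatched] ≤ P[u unmatched and v unmatched]
    ((∑ S ∈ univ.filter
        (fun S : Finset E => IsBipMatching eu ev S ∧ ∀ e ∈ S, eu e ≠ u),
        ∏ e ∈ S, w e) / Z) *
    ((∑ S ∈ univ.filter
        (fun S : Finset E => IsBipMatching eu ev S ∧ ∀ e ∈ S, ev e ≠ v),
        ∏ e ∈ S, w e) / Z) ≤
    (∑ S ∈ univ.filter
        (fun S : Finset E => IsBipMatching eu ev S ∧ (∀ e ∈ S, eu e ≠ u) ∧ (∀ e ∈ S, ev e ≠ v)),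
        ∏ e ∈ S, w e) / Z := by
  have hw' : ∀ e, 0 ≤ w e := fun e => (hw e).le
  have hZ' : Z = partitionFn eu ev w univ := by rw [hZ, partitionFn, powerset_univ]
  rw [sum_filter_univ_eq_partitionFn (deleteU eu univ u) (fun S => ∀ e ∈ S, eu e ≠ u)
      fun S => by simp [deleteU, subset_iff],
    sum_filter_univ_eq_partitionFn (deleteV ev univ v) (fun S => ∀ e ∈ S, ev e ≠ v)
      fun S => by simp [deleteV, subset_iff],
    sum_filter_univ_eq_partitionFn (deleteV ev (deleteU eu univ u) v)
      (fun S => (∀ e ∈ S, eu e ≠ u) ∧ ∀ e ∈ S, ev e ≠ v)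
      fun S => by simp [deleteU, deleteV, subset_iff, forall_and], hZ']
  have hcorr : UnmatchedPosCorrelated eu ev w univ u v := (unmatched_correlations hw' univ).1 u v
  have hpos := partitionFn_pos eu ev hw' univ
  rw [UnmatchedPosCorrelated] at hcorr
  rw [div_mul_div_comm, div_le_div_iff₀ (by positivity) hpos]
  linear_combination mul_le_mul_of_nonneg_right hcorr hpos.le

theorem stmt_3
    {U V E : Type*} [Fintype U] [Fintype V] [Fintype E]
    [DecidableEq U] [DecidableEq V] [DecidableEq E]
    -- a finite simple bipartite graph
    (eu : E → U) (ev : E → V)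
    (hsimple : Function.Injective (fun e => (eu e, ev e)))
    (w : E → ℝ) (hw : ∀ e, 0 < w e)
    (u : U) (v : V)
    -- partition function of the Gibbs distribution on matchings
    (Z : ℝ)
    (hZ : Z = ∑ S ∈ univ.filter (fun S : Finset E => IsBipMatching eu ev S), ∏ e ∈ S, w e) :
    -- P[u unmatched] * P[v unmatched] ≤ P[u unmatched and v unmatched]
    ((∑ S ∈ univ.filter
        (fun S : Finset E => IsBipMatching eu ev S ∧ ∀ e ∈ S, eu e ≠ u),
        ∏ e ∈ S, w e) / Z) *
    ((∑ S ∈ univ.filter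
        (fun S : Finset E => IsBipMatching eu ev S ∧ ∀ e ∈ S, ev e ≠ v),
        ∏ e ∈ S, w e) / Z) ≤
    (∑ S ∈ univ.filter
        (fun S : Finset E => IsBipMatching eu ev S ∧ (∀ e ∈ S, eu e ≠ u) ∧ (∀ e ∈ S, ev e ≠ v)),
        ∏ e ∈ S, w e) / Z :=
  stmt_3_general eu ev w hw u v Z hZ
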